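/- The dual space K(ℓ₂)* of the space of compact operators on ℓ₂ fails the Schur property; that is, there exists a weakly null sequence in K(ℓ₂)* which does not converge to 0 in norm. -/

import Mathlib

open Filter Metric Topology Pointwise NormedSpace
open scoped ENNReal

set_option maxHeartbeats 1000000
set_option synthInstance.maxHeartbeats 400000

noncomputable section

/-- The Hilbert space `ℓ₂` (of real sequences). -/
abbrev ellTwo : Type := lp (fun _ : ℕ => ℝ) 2

/-- The space `K(ℓ₂)` of compact operators on `ℓ₂`, with the operator norm. -/
abbrev KellTwo : Subspace ℝ (ellTwo →L[ℝ] ellTwo) := compactOperator (RingHom.id ℝ) ellTwo ellTwo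

/-!
The functionals `φₙ A = ⟪e₀, A eₙ⟫` on `K(ℓ₂)` are the images of the basis vectors `eₙ` under the
bounded linear map `y ↦ (A ↦ ⟪e₀, A y⟫)` from `ℓ₂` to `K(ℓ₂)*`. An orthonormal sequence is weakly
null (Riesz representation and Bessel's inequality), and bounded linear maps preserve weak
nullity, so `(φₙ)` is weakly null. On the other hand the rank-one operator `x ↦ ⟪eₙ, x⟫ e₀` is
compact, has norm one and `φₙ`-value one, so `‖φₙ‖ ≥ 1` for every `n`.
-/

open scoped InnerProductSpace

namespace ContinuousLinearMap

section VectorFunctional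

variable {𝕜 E F V : Type*} [NontriviallyNormedField 𝕜]
  [SeminormedAddCommGroup E] [NormedSpace 𝕜 E] [SeminormedAddCommGroup F] [NormedSpace 𝕜 F]
  [SeminormedAddCommGroup V] [NormedSpace 𝕜 V]

/-- `V` is a space of operators through `T`, not a submodule of `E →L[𝕜] F`: for such a submodule
`S`, instance search does not find the norm on `StrongDual 𝕜 S`. -/
def vectorFunctionalL (g : StrongDual 𝕜 F) (T : V →L[𝕜] E →L[𝕜] F) : E →L[𝕜] StrongDual 𝕜 V :=
  (compL 𝕜 V (E →L[𝕜] F) 𝕜).flip T ∘L compL 𝕜 (E →L[𝕜] F) F 𝕜 g ∘L apply 𝕜 F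

@[simp]
theorem vectorFunctionalL_apply (g : StrongDual 𝕜 F) (T : V →L[𝕜] E →L[𝕜] F) (x : E) (a : V) :
    vectorFunctionalL g T x a = g (T a x) :=
  rfl

theorem norm_apply_le_norm_vectorFunctionalL (g : StrongDual 𝕜 F) (T : V →L[𝕜] E →L[𝕜] F)
    (x : E) {a : V} (ha : ‖a‖ ≤ 1) : ‖g (T a x)‖ ≤ ‖vectorFunctionalL g T x‖ :=
  ((vectorFunctionalL g T x).le_opNorm a).trans (mul_le_of_le_one_right (norm_nonneg _) ha)

end VectorFunctional

theorem isCompactOperator_smulRight {𝕜 E F : Type*} [NontriviallyNormedField 𝕜]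
    [LocallyCompactSpace 𝕜] [SeminormedAddCommGroup E] [NormedSpace 𝕜 E]
    [SeminormedAddCommGroup F] [NormedSpace 𝕜 F] (c : StrongDual 𝕜 E) (v : F) :
    IsCompactOperator (c.smulRight v) :=
  (isCompactOperator_of_locallyCompactSpace_dom c).continuous_comp
    (continuous_id.smul continuous_const)

end ContinuousLinearMap

section Hilbert

variable {𝕜 H ι : Type*} [RCLike 𝕜] [NormedAddCommGroup H] [InnerProductSpace 𝕜 H]

open ContinuousLinearMap in
theorem exists_mem_compactOperator_norm_le_one_inner_eq_one {x u : H} (hx : ‖x‖ = 1)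
    (hu : ‖u‖ = 1) : ∃ A ∈ compactOperator (RingHom.id 𝕜) H H, ‖A‖ ≤ 1 ∧ ⟪u, A x⟫_𝕜 = 1 := by
  refine ⟨(innerSL 𝕜 x).smulRight u, isCompactOperator_smulRight _ _, ?_, ?_⟩
  · simp [norm_smulRight_apply, hx, hu]
  · simp [hx, hu]

theorem Orthonormal.tendsto_inner_cofinite_zero {e : ι → H} (he : Orthonormal 𝕜 e) (x : H) :
    Tendsto (fun i => ⟪x, e i⟫_𝕜) cofinite (𝓝 0) := by
  have hsq := (he.inner_products_summable x).tendsto_cofinite_zero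
  rw [tendsto_zero_iff_norm_tendsto_zero]
  simpa [Real.sqrt_sq, norm_inner_symm] using hsq.sqrt

theorem Orthonormal.tendsto_dual_apply_cofinite_zero [CompleteSpace H] {e : ι → H}
    (he : Orthonormal 𝕜 e) (f : StrongDual 𝕜 H) : Tendsto (fun i => f (e i)) cofinite (𝓝 0) := by
  simpa using he.tendsto_inner_cofinite_zero ((InnerProductSpace.toDual 𝕜 H).symm f)

end Hilbert

theorem dual_KellTwo_fails_schur :
    ∃ φ : ℕ → StrongDual ℝ KellTwo,
      (∀ F : StrongDual ℝ (StrongDual ℝ KellTwo),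
        Tendsto (fun n => F (φ n)) atTop (𝓝 0)) ∧
      ¬ Tendsto (fun n => @norm _ ContinuousLinearMap.hasOpNorm (φ n)) atTop (𝓝 0) := by
  set e : HilbertBasis ℕ ℝ ellTwo := default
  have he := e.orthonormal
  set Φ := ContinuousLinearMap.vectorFunctionalL (E := ellTwo) (V := KellTwo)
    (innerSL ℝ (e 0)) KellTwo.subtypeL
  have hnorm (n : ℕ) : 1 ≤ @norm _ ContinuousLinearMap.hasOpNorm (Φ (e n)) := by
    obtain ⟨A, hA, hA1, hAe⟩ :=
      exists_mem_compactOperator_norm_le_one_inner_eq_one (𝕜 := ℝ) (he.1 n) (he.1 0)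
    calc (1 : ℝ) = ‖innerSL ℝ (e 0) (A (e n))‖ := by simp [hAe]
      _ ≤ _ := ContinuousLinearMap.norm_apply_le_norm_vectorFunctionalL
        (innerSL ℝ (e 0)) KellTwo.subtypeL (e n) (a := (⟨A, hA⟩ : KellTwo)) hA1
  refine ⟨fun n => Φ (e n), fun F => ?_, fun h => ?_⟩
  · rw [← Nat.cofinite_eq_atTop]
    exact he.tendsto_dual_apply_cofinite_zero (F ∘L Φ)
  · obtain ⟨n, hn⟩ := (h.eventually (gt_mem_nhds one_pos)).exists
    exact (hnorm n).not_gt hn
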